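/- arXiv:2104.09950 — 4 statements merged into one kernel-verified Lean document; each statement's English description precedes it below -/
import Mathlib

section
/- Let T be a finite tree and w : V(T) → ℕ a weight function with total weight τ = ∑_{t ∈ V(T)} w(t), such that 1 ≤ w(t) ≤ 2τ/5 for every vertex t. Then there exists a non-leaf vertex t̂ of T such that the connected components of T − t̂ can be partitioned into two collections C₁ and C₂ with ∑_{C ∈ C₁} w(C) ≤ 2τ/3 and ∑_{C ∈ C₂} w(C) ≤ 2τ/3, where w(C) denotes the sum of the weights of the vertices of C. -/
/-!
Take a vertex `t` minimising the heaviest component of `T - t`. If some component `C` of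
`T - t` had more than half the weight, moving to the neighbour `v` of `t` in `C` would leave
only components of weight `< w(C)`: those inside `C` lose `v`, and the others lie outside `C`,
so weigh less than half. Hence every component of `T - t` weighs at most `τ/2`. Such a vertex
is no leaf, since otherwise `w(t) ≥ τ/2 > 2τ/5`. Finally, pieces of weight at most `τ/2` with
total at most `τ` split into two groups of weight at most `2τ/3`: take a heaviest group of
weight at most `2τ/3`; if it is not everything, adding any further piece overshoots `2τ/3`,
so the group already weighs more than `τ/3`.
-/

open Finset SimpleGraph

theorem Finset.exists_subset_three_mul_sum_le {ι : Type*} [DecidableEq ι] (s : Finset ι)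
    (a : ι → ℕ) (τ : ℕ) (ha : ∀ i ∈ s, 2 * a i ≤ τ) (hs : ∑ i ∈ s, a i ≤ τ) :
    ∃ P ⊆ s, 3 * ∑ i ∈ P, a i ≤ 2 * τ ∧ 3 * ∑ i ∈ s \ P, a i ≤ 2 * τ := by
  obtain ⟨P, hP, hmax⟩ :=
    exists_max_image (s.powerset.filter fun P => 3 * ∑ i ∈ P, a i ≤ 2 * τ)
      (fun P => ∑ i ∈ P, a i) ⟨∅, by simp⟩
  rw [mem_filter, mem_powerset] at hP
  refine ⟨P, hP.1, hP.2, ?_⟩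
  by_contra! hrest
  obtain ⟨i, hi, hai⟩ := exists_ne_zero_of_sum_ne_zero (s := s \ P) (f := a) (by omega)
  rw [mem_sdiff] at hi
  have hsingle : a i ≤ ∑ j ∈ P, a j := by
    have := ha i hi.1
    simpa using hmax {i} (by simp [hi.1]; omega)
  have hinsert : ¬ 3 * ∑ j ∈ insert i P, a j ≤ 2 * τ := fun hle => by
    have := hmax _ (mem_filter.2 ⟨mem_powerset.2 (insert_subset hi.1 hP.1), hle⟩)
    rw [sum_insert hi.2] at this
    omega
  rw [sum_insert hi.2] at hinsert
  have := sum_sdiff hP.1 (f := a)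
  omega

namespace SimpleGraph

variable {V : Type*} {G : SimpleGraph V}

def ReachableAvoiding (G : SimpleGraph V) (t u v : V) : Prop :=
  ∃ p : G.Walk u v, t ∉ p.support

namespace ReachableAvoiding

variable {t u v x : V}

theorem ne_right (h : G.ReachableAvoiding t u v) : v ≠ t := by
  obtain ⟨p, hp⟩ := h
  exact fun he => hp (he ▸ p.end_mem_support)

theorem refl (h : u ≠ t) : G.ReachableAvoiding t u u :=
  ⟨Walk.nil, by simpa using h.symm⟩

theorem symm (h : G.ReachableAvoiding t u v) : G.ReachableAvoiding t v u := by
  obtain ⟨p, hp⟩ := h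
  exact ⟨p.reverse, by simpa using hp⟩

theorem trans (h : G.ReachableAvoiding t u v) (h' : G.ReachableAvoiding t v x) :
    G.ReachableAvoiding t u x := by
  obtain ⟨p, hp⟩ := h
  obtain ⟨q, hq⟩ := h'
  exact ⟨p.append q, by simp [Walk.mem_support_append_iff, hp, hq]⟩

end ReachableAvoiding

theorem reachableAvoiding_of_reachable_induce {t : V} {a b : {x : V | x ≠ t}}
    (h : (G.induce {x | x ≠ t}).Reachable a b) : G.ReachableAvoiding t a b := by
  obtain ⟨p⟩ := h
  refine ⟨p.map (Embedding.induce _).toHom, fun ht => ?_⟩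
  obtain ⟨x, -, hx⟩ := List.mem_map.1 ((Walk.support_map _ p) ▸ ht)
  exact x.2 hx

theorem Walk.exists_adj_subwalk_avoiding {t u : V} (p : G.Walk t u) (hu : u ≠ t) :
    ∃ a, G.Adj t a ∧ ∃ r : G.Walk a u, t ∉ r.support ∧ r.support ⊆ p.support := by
  classical
  obtain ⟨a, h, r, hr⟩ := p.bypass.exists_eq_cons_of_ne hu.symm
  have hpath := p.bypass_isPath
  rw [hr, cons_isPath_iff] at hpath
  refine ⟨a, h, r, hpath.2, fun x hx => p.support_bypass_subset_support ?_⟩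
  rw [hr, Walk.support_cons]
  exact List.mem_cons_of_mem _ hx

theorem Reachable.exists_adj_reachableAvoiding {t u : V} (h : G.Reachable t u) (hu : u ≠ t) :
    ∃ a, G.Adj t a ∧ G.ReachableAvoiding t a u := by
  obtain ⟨p⟩ := h
  obtain ⟨a, ha, r, hr, -⟩ := p.exists_adj_subwalk_avoiding hu
  exact ⟨a, ha, r, hr⟩

namespace IsAcyclic

variable {t v a b y z : V}

theorem not_reachableAvoiding_of_adj (hG : G.IsAcyclic) (ha : G.Adj t a) (hb : G.Adj t b)
    (hab : a ≠ b) : ¬ G.ReachableAvoiding t a b := by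
  classical
  rintro ⟨p, hp⟩
  have hlong : (Walk.cons ha p.bypass).IsPath :=
    p.bypass_isPath.cons fun h => hp (p.support_bypass_subset_support h)
  have hshort : (Walk.cons hb Walk.nil).IsPath := by simp [hb.ne]
  have := congrArg (fun q : G.Path t b => q.1.snd)
    ((hG.subsingleton_path t b).elim ⟨_, hlong⟩ ⟨_, hshort⟩)
  exact hab (by simpa using this)

theorem reachableAvoiding_of_adj (hG : G.IsAcyclic) (hadj : G.Adj t v)
    (hv : G.ReachableAvoiding t v y) (hyz : G.ReachableAvoiding v y z) :
    G.ReachableAvoiding t y z := by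
  classical
  obtain ⟨q, hq⟩ := hyz
  -- If `q` met `t`, its part before `t` would join `y` to a neighbour `a ≠ v` of `t` in `G - t`.
  refine ⟨q, fun ht => ?_⟩
  obtain ⟨a, ha, r, hrt, hrq⟩ :=
    (q.takeUntil t ht).reverse.exists_adj_subwalk_avoiding hv.ne_right
  have hsub : r.support ⊆ q.support := fun x hx =>
    q.support_takeUntil_subset_support ht (by simpa using hrq hx)
  have hav : a ≠ v := fun h => hq (hsub (h ▸ r.start_mem_support))
  have hay : G.ReachableAvoiding t a y := ⟨r, hrt⟩
  exact hG.not_reachableAvoiding_of_adj hadj ha hav.symm (hv.trans hay.symm)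

end IsAcyclic

section Finite

variable [Fintype V] {t u v y : V}

open Classical in
/-- Empty when `u = t`. -/
noncomputable def componentAvoiding (G : SimpleGraph V) (t u : V) : Finset V :=
  {y | G.ReachableAvoiding t u y}

theorem mem_componentAvoiding : y ∈ G.componentAvoiding t u ↔ G.ReachableAvoiding t u y := by
  simp [componentAvoiding]

theorem componentAvoiding_eq (h : G.ReachableAvoiding t u v) :
    G.componentAvoiding t u = G.componentAvoiding t v := by
  ext y
  simp only [mem_componentAvoiding]
  exact ⟨h.symm.trans, h.trans⟩

theorem mem_componentAvoiding_iff :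
    y ∈ G.componentAvoiding t u ↔
      y ≠ t ∧ G.componentAvoiding t y = G.componentAvoiding t u := by
  refine ⟨fun h => ?_, fun ⟨hy, h⟩ => ?_⟩
  · rw [mem_componentAvoiding] at h
    exact ⟨h.ne_right, (componentAvoiding_eq h).symm⟩
  · exact h ▸ mem_componentAvoiding.2 (.refl hy)

theorem sum_filter_componentAvoiding [DecidableEq V] (t : V) (w : V → ℕ)
    (p : Finset V → Prop) [DecidablePred p] :
    ∑ x with x ≠ t ∧ p (G.componentAvoiding t x), w x =
      ∑ S ∈ ((univ.erase t).image (G.componentAvoiding t)).filter p, ∑ y ∈ S, w y := by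
  rw [filter_image, sum_image']
  · exact sum_congr (by ext; simp) fun _ _ => rfl
  intro x hx
  simp only [mem_filter, mem_erase] at hx
  congr 1
  ext y
  simp only [mem_componentAvoiding_iff, mem_filter, mem_erase, mem_univ, and_true]
  exact ⟨fun ⟨hy, h⟩ => ⟨⟨hy, h ▸ hx.2⟩, h⟩, fun ⟨⟨hy, _⟩, h⟩ => ⟨hy, h⟩⟩

theorem IsAcyclic.sum_componentAvoiding_lt [DecidableEq V] (hG : G.IsAcyclic) {w : V → ℕ}
    (hw : ∀ v, 0 < w v) (hadj : G.Adj t v)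
    (hheavy : ∑ y, w y < 2 * ∑ y ∈ G.componentAvoiding t v, w y) (x : V) :
    ∑ y ∈ G.componentAvoiding v x, w y < ∑ y ∈ G.componentAvoiding t v, w y := by
  by_cases hxC : G.ReachableAvoiding t v x
  · have hsub : G.componentAvoiding v x ⊆ (G.componentAvoiding t v).erase v := by
      intro y hy
      rw [mem_componentAvoiding] at hy
      rw [mem_erase, mem_componentAvoiding]
      exact ⟨hy.ne_right, hxC.trans (hG.reachableAvoiding_of_adj hadj hxC hy)⟩
    calc ∑ y ∈ G.componentAvoiding v x, w y
        ≤ ∑ y ∈ (G.componentAvoiding t v).erase v, w y := sum_le_sum_of_subset hsub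
      _ < ∑ y ∈ G.componentAvoiding t v, w y :=
        sum_erase_lt_of_pos (mem_componentAvoiding.2 (.refl hadj.ne.symm)) (hw v)
  · have hdisj : Disjoint (G.componentAvoiding v x) (G.componentAvoiding t v) := by
      rw [Finset.disjoint_left]
      intro y hxy hvy
      rw [mem_componentAvoiding] at hxy hvy
      exact hxC (hvy.trans (hG.reachableAvoiding_of_adj hadj hvy hxy.symm))
    have := sum_le_sum_of_subset (f := w)
      (subset_univ (G.componentAvoiding v x ∪ G.componentAvoiding t v))
    rw [sum_union hdisj] at this
    omega

theorem Connected.exists_centroid (hconn : G.Connected) (hG : G.IsAcyclic) (w : V → ℕ)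
    (hw : ∀ v, 0 < w v) :
    ∃ t, ∀ u ≠ t, 2 * ∑ y ∈ G.componentAvoiding t u, w y ≤ ∑ y, w y := by
  classical
  have : Nonempty V := hconn.nonempty
  let heaviest (t : V) : ℕ := univ.sup fun u => ∑ y ∈ G.componentAvoiding t u, w y
  obtain ⟨t, -, ht⟩ := exists_min_image univ heaviest univ_nonempty
  refine ⟨t, fun u hu => ?_⟩
  by_contra! hheavy
  obtain ⟨v, hadj, htvu⟩ := (hconn.preconnected t u).exists_adj_reachableAvoiding hu
  rw [← componentAvoiding_eq htvu] at hheavy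
  have hv : heaviest v < ∑ y ∈ G.componentAvoiding t v, w y :=
    (Finset.sup_lt_iff (by rw [Nat.bot_eq_zero]; omega)).2 fun x _ =>
      hG.sum_componentAvoiding_lt hw hadj hheavy x
  have ht' : ∑ y ∈ G.componentAvoiding t v, w y ≤ heaviest t :=
    le_sup (f := fun u => ∑ y ∈ G.componentAvoiding t u, w y) (mem_univ v)
  exact absurd (ht v (mem_univ v)) (by omega)

theorem Connected.exists_two_adj_of_centroid [DecidableEq V] (hconn : G.Connected) {w : V → ℕ}
    (hcent : ∀ u ≠ t, 2 * ∑ y ∈ G.componentAvoiding t u, w y ≤ ∑ y, w y)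
    (ht : 2 * w t < ∑ y, w y) :
    ∃ a b, a ≠ b ∧ G.Adj t a ∧ G.Adj t b := by
  by_contra! hleaf
  have hrest : 2 * ∑ y ∈ univ.erase t, w y ≤ ∑ y, w y := by
    rcases (univ.erase t).eq_empty_or_nonempty with he | ⟨u, hu⟩
    · simp [he]
    obtain ⟨a, ha, -⟩ :=
      (hconn.preconnected t u).exists_adj_reachableAvoiding (ne_of_mem_erase hu)
    refine le_trans (Nat.mul_le_mul_left 2 (sum_le_sum_of_subset fun y hy => ?_))
      (hcent a ha.ne.symm)
    obtain ⟨b, hb, hby⟩ :=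
      (hconn.preconnected t y).exists_adj_reachableAvoiding (ne_of_mem_erase hy)
    obtain rfl : b = a := of_not_not fun hba => hleaf b a hba hb ha
    exact mem_componentAvoiding.2 hby
  have := add_sum_erase univ w (mem_univ t)
  omega

end Finite

end SimpleGraph

/-- In a finite tree `T` with weights `w` such that
`1 ≤ w t ≤ 2τ/5` for all vertices (where `τ` is the total weight), there is a
non-leaf vertex `t0` (i.e. a vertex with at least two distinct neighbours) such
that the connected components of `T − t0` can be two-coloured (via `g`, constant
on components of `T − t0`) so that each colour class has total weight at most `2τ/3`. -/
theorem stmt0 {V : Type} [Fintype V] [DecidableEq V] (T : SimpleGraph V)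
    (hconn : T.Connected) (hacyc : T.IsAcyclic) (w : V → ℕ) (τ : ℕ)
    (hτ : τ = ∑ v, w v)
    (hlb : ∀ v, 1 ≤ w v) (hub : ∀ v, (w v : ℚ) ≤ 2 * (τ : ℚ) / 5) :
    ∃ t0 : V, (∃ a b : V, a ≠ b ∧ T.Adj t0 a ∧ T.Adj t0 b) ∧
      ∃ g : V → Bool,
        (∀ (u v : V) (hu : u ≠ t0) (hv : v ≠ t0),
            (T.induce {x | x ≠ t0}).Reachable ⟨u, hu⟩ ⟨v, hv⟩ → g u = g v) ∧
        ((∑ v ∈ Finset.univ.filter (fun v => v ≠ t0 ∧ g v = true), w v : ℕ) : ℚ)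
            ≤ 2 * (τ : ℚ) / 3 ∧
        ((∑ v ∈ Finset.univ.filter (fun v => v ≠ t0 ∧ g v = false), w v : ℕ) : ℚ)
            ≤ 2 * (τ : ℚ) / 3 := by
  obtain ⟨t0, hcent⟩ := hconn.exists_centroid hacyc w hlb
  rw [← hτ] at hcent
  have hcast (n : ℕ) (hn : 3 * n ≤ 2 * τ) : (n : ℚ) ≤ 2 * τ / 3 := by
    rw [le_div_iff₀ (by norm_num)]
    exact_mod_cast (by omega : n * 3 ≤ 2 * τ)
  have ht0 : 2 * w t0 < ∑ v, w v := by
    have : (5 * w t0 : ℚ) ≤ 2 * τ := by linarith [hub t0]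
    have : 5 * w t0 ≤ 2 * τ := by exact_mod_cast this
    have := hlb t0
    omega
  set K := (univ.erase t0).image (T.componentAvoiding t0)
  have hK : ∀ S ∈ K, 2 * ∑ y ∈ S, w y ≤ τ := by
    simp only [K, mem_image, mem_erase]
    rintro _ ⟨u, ⟨hu, -⟩, rfl⟩
    exact hcent u hu
  have hKsum : ∑ S ∈ K, ∑ y ∈ S, w y ≤ τ := by
    have := T.sum_filter_componentAvoiding t0 w (fun _ => True)
    simp only [filter_true_of_mem fun _ _ => trivial] at this
    rw [← this, hτ]
    exact sum_le_sum_of_subset (subset_univ _)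
  obtain ⟨P, hPK, hP, hKP⟩ := exists_subset_three_mul_sum_le K _ τ hK hKsum
  refine ⟨t0, hconn.exists_two_adj_of_centroid (hτ ▸ hcent) ht0,
    fun v => decide (T.componentAvoiding t0 v ∈ P), ?_, hcast _ ?_, hcast _ ?_⟩
  · intro u v hu hv h
    simp only [componentAvoiding_eq (reachableAvoiding_of_reachable_induce h)]
  · simp only [decide_eq_true_eq]
    rwa [sum_filter_componentAvoiding, filter_mem_eq_inter, inter_eq_right.2 hPK]
  · simp only [decide_eq_false_iff_not]
    rwa [sum_filter_componentAvoiding t0 w (· ∉ P), ← sdiff_eq_filter]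
end

section
/- Let G be an (s,c)-unbreakable graph and S ⊆ V(G) with |S| ≤ c. If every connected component of G − S has fewer than s vertices, then |V(G)| < 3s + c. -/
/-- `(X, Y)` is a separation of `G`: the two sides cover all vertices and there is
no edge between `X \ Y` and `Y \ X`. -/
def IsSeparation {V : Type} (G : SimpleGraph V) (X Y : Set V) : Prop :=
  X ∪ Y = Set.univ ∧ ∀ u ∈ X \ Y, ∀ v ∈ Y \ X, ¬ G.Adj u v

/-- `G` is `(s, c)`-unbreakable: there is no separation of order at most `c`
with both strict sides of size at least `s`. -/
def Unbreakable {V : Type} (G : SimpleGraph V) (s c : ℕ) : Prop :=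
  ¬ ∃ X Y : Set V, IsSeparation G X Y ∧ (X ∩ Y).ncard ≤ c ∧
      s ≤ (X \ Y).ncard ∧ s ≤ (Y \ X).ncard

/-!
Each component of `G - S` has fewer than `s` vertices, so if `|V(G)| ≥ 3s + c` they carry at
least `3s` vertices in total. Adding components one at a time until the total first reaches `s`
gives a union `A` of components with `s ≤ |A| < 2s`, hence at least `s` vertices remain in the
other components. Since no edge of `G - S` leaves a component, `(S ∪ A, S ∪ Aᶜ)` is a separation
of order `|S| ≤ c` with both sides of size at least `s`, contradicting unbreakability.
-/

namespace Finset

variable {ι : Type*} [DecidableEq ι] {s : ℕ} {w : ι → ℕ}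

theorem exists_subset_le_sum_and_sum_lt_two_mul (hs : 0 < s) {u : Finset ι}
    (hw : ∀ i ∈ u, w i < s) (hu : s ≤ ∑ i ∈ u, w i) :
    ∃ t ⊆ u, s ≤ ∑ i ∈ t, w i ∧ ∑ i ∈ t, w i < 2 * s := by
  induction u using Finset.induction_on with
  | empty => simp only [sum_empty] at hu; omega
  | @insert a u ha ih =>
    by_cases hsmall : ∑ i ∈ insert a u, w i < 2 * s
    · exact ⟨insert a u, Subset.refl _, hu, hsmall⟩
    · have hwa : w a < s := hw a (mem_insert_self a u)
      rw [sum_insert ha] at hsmall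
      obtain ⟨t, htu, ht⟩ := ih (fun i hi => hw i (mem_insert_of_mem hi)) (by omega)
      exact ⟨t, htu.trans (subset_insert a u), ht⟩

theorem exists_subset_le_sum_and_le_sum_sdiff {u : Finset ι}
    (hw : ∀ i ∈ u, w i < s) (hu : 3 * s ≤ ∑ i ∈ u, w i) :
    ∃ t ⊆ u, s ≤ ∑ i ∈ t, w i ∧ s ≤ ∑ i ∈ u \ t, w i := by
  rcases Nat.eq_zero_or_pos s with rfl | hs
  · exact ⟨∅, empty_subset u, Nat.zero_le _, Nat.zero_le _⟩
  obtain ⟨t, htu, hst, hts⟩ := exists_subset_le_sum_and_sum_lt_two_mul hs hw (by omega)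
  have hsplit := sum_sdiff (f := w) htu
  exact ⟨t, htu, hst, by omega⟩

end Finset

variable {V : Type} {G : SimpleGraph V} {S A : Set V}

theorem isSeparation_union_union_compl
    (hA : ∀ u v, u ∉ S → v ∉ S → G.Adj u v → u ∈ A → v ∈ A) :
    IsSeparation G (S ∪ A) (S ∪ Aᶜ) := by
  refine ⟨by rw [← Set.union_union_distrib_left, Set.union_compl_self, Set.union_univ], ?_⟩
  rintro u ⟨huX, huY⟩ v ⟨hvY, hvX⟩ huv
  simp only [Set.mem_union, Set.mem_compl_iff, not_or, not_not] at huX huY hvY hvX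
  exact hvX.2 (hA u v huY.1 hvX.1 huv huY.2)

theorem Unbreakable.ncard_diff_lt_or_ncard_compl_diff_lt {s c : ℕ} (hG : Unbreakable G s c)
    (hS : S.ncard ≤ c) (hA : ∀ u v, u ∉ S → v ∉ S → G.Adj u v → u ∈ A → v ∈ A) :
    (A \ S).ncard < s ∨ (Aᶜ \ S).ncard < s := by
  have hX : (S ∪ A) \ (S ∪ Aᶜ) = A \ S := by
    ext x; simp only [Set.mem_sdiff, Set.mem_union, Set.mem_compl_iff]; tauto
  have hY : (S ∪ Aᶜ) \ (S ∪ A) = Aᶜ \ S := by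
    ext x; simp only [Set.mem_sdiff, Set.mem_union, Set.mem_compl_iff]; tauto
  by_contra! hbig
  refine hG ⟨S ∪ A, S ∪ Aᶜ, isSeparation_union_union_compl hA, ?_, ?_, ?_⟩
  · rwa [← Set.union_inter_distrib_left, Set.inter_compl_self, Set.union_empty]
  · exact hX ▸ hbig.1
  · exact hY ▸ hbig.2

theorem SimpleGraph.ncard_preimage_connectedComponentMk {W : Type} [Finite W] (H : SimpleGraph W)
    (T : Finset H.ConnectedComponent) :
    (H.connectedComponentMk ⁻¹' T).ncard = ∑ C ∈ T, C.supp.ncard := by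
  rw [← Nat.card_coe_set_eq, Finset.card_preimage_eq_sum_card_image_eq fun _ _ => Set.toFinite _]
  rfl

theorem Unbreakable.ncard_preimage_connectedComponentMk_lt_or {s c : ℕ} (hG : Unbreakable G s c)
    (hS : S.ncard ≤ c) (T : Set (G.induce Sᶜ).ConnectedComponent) :
    ((G.induce Sᶜ).connectedComponentMk ⁻¹' T).ncard < s ∨
      ((G.induce Sᶜ).connectedComponentMk ⁻¹' Tᶜ).ncard < s := by
  set A : Set V := Subtype.val '' ((G.induce Sᶜ).connectedComponentMk ⁻¹' T)
  have hA : ∀ u v, u ∉ S → v ∉ S → G.Adj u v → u ∈ A → v ∈ A := by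
    rintro u v - hv huv ⟨x, hxT, rfl⟩
    refine ⟨⟨v, hv⟩, ?_, rfl⟩
    have hxv : (G.induce Sᶜ).Adj x ⟨v, hv⟩ := huv
    simpa only [Set.mem_preimage, SimpleGraph.ConnectedComponent.sound hxv.reachable] using hxT
  have hAS : A \ S = A :=
    sdiff_eq_left.2 (Set.subset_compl_iff_disjoint_right.1 (Subtype.coe_image_subset _ _))
  have hAcS : Aᶜ \ S = Subtype.val '' ((G.induce Sᶜ).connectedComponentMk ⁻¹' Tᶜ) := by
    ext v
    constructor
    · rintro ⟨hvA, hvS⟩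
      exact ⟨⟨v, hvS⟩, fun hvT => hvA ⟨⟨v, hvS⟩, hvT, rfl⟩, rfl⟩
    · rintro ⟨x, hxT, rfl⟩
      exact ⟨fun ⟨y, hyT, hyx⟩ => hxT (Subtype.val_injective hyx ▸ hyT), x.2⟩
  have hsides := hG.ncard_diff_lt_or_ncard_compl_diff_lt hS hA
  rwa [hAS, hAcS, Set.ncard_image_of_injective _ Subtype.val_injective,
    Set.ncard_image_of_injective _ Subtype.val_injective] at hsides

/-- If `G` is `(s, c)`-unbreakable, `|S| ≤ c` and every connected
component of `G − S` has fewer than `s` vertices, then `|V(G)| < 3s + c`. -/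
theorem stmt2 {V : Type} [Fintype V] (G : SimpleGraph V) (s c : ℕ)
    (S : Set V) (hS : S.ncard ≤ c) (hunb : Unbreakable G s c)
    (hsmall : ∀ C : (G.induce Sᶜ).ConnectedComponent, C.supp.ncard < s) :
    Fintype.card V < 3 * s + c := by
  classical
  by_contra! hbig
  have : Fintype (G.induce Sᶜ).ConnectedComponent := Fintype.ofFinite _
  have htotal : 3 * s ≤ ∑ C : (G.induce Sᶜ).ConnectedComponent, C.supp.ncard := by
    rw [← (G.induce Sᶜ).ncard_preimage_connectedComponentMk, Finset.coe_univ, Set.preimage_univ,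
      Set.ncard_univ, Nat.card_coe_set_eq]
    have hcard := Set.ncard_add_ncard_compl S
    rw [Nat.card_eq_fintype_card] at hcard
    omega
  obtain ⟨T, -, hT, hTc⟩ :=
    Finset.exists_subset_le_sum_and_le_sum_sdiff (fun C _ => hsmall C) htotal
  rw [← Finset.compl_eq_univ_sdiff] at hTc
  rcases hunb.ncard_preimage_connectedComponentMk_lt_or hS T with h | h
  · rw [(G.induce Sᶜ).ncard_preimage_connectedComponentMk] at h
    omega
  · rw [← Finset.coe_compl, (G.induce Sᶜ).ncard_preimage_connectedComponentMk] at h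
    omega
end

section
/- Let G be a graph on n vertices and p, q nonnegative integers. The number of vertex sets B ⊆ V(G) such that G[B] is connected and nonempty, |B| ≤ p, and |N_G(B)| ≤ q, is at most 2^{p+q} · n. -/
/-!
Grow a connected set `B` from a vertex `r` by branching: as long as the current core `X ⊆ B`
has a neighbour `w` not yet classified, either `w ∈ B` or `w ∈ N(B)`. Each decision uses up
one unit of the budget `|B \ X| + |N(B) \ Y| ≤ p + q`, where `Y` collects the vertices
classified as outside `B`; once every neighbour of `X` is classified, connectivity forces
`B = X`. Hence at most `2 ^ (p + q)` sets contain a given vertex.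
-/

lemma Set.ncard_sdiff_insert_add_one {α : Type*} [Finite α] {s t : Set α} {a : α} (has : a ∈ s)
    (hat : a ∉ t) : (s \ insert a t).ncard + 1 = (s \ t).ncard := by
  rw [← Set.ncard_sdiff_singleton_add_one (show a ∈ s \ t from ⟨has, hat⟩), Set.sdiff_sdiff,
    Set.union_singleton]

namespace SimpleGraph

variable {V : Type*} (G : SimpleGraph V)

def openNeighborhood (B : Set V) : Set V := {v | v ∉ B ∧ ∃ u ∈ B, G.Adj u v}

def connectedExtensions (X Y : Set V) (k : ℕ) : Set (Set V) :=
  {B | X ⊆ B ∧ Disjoint B Y ∧ (G.induce B).Connected ∧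
    (B \ X).ncard + (G.openNeighborhood B \ Y).ncard ≤ k}

variable {G}

lemma exists_adj_of_connected_induce {X B : Set V} {v : V} (hX : X.Nonempty) (hXB : X ⊆ B)
    (hB : (G.induce B).Connected) (hvB : v ∈ B) (hvX : v ∉ X) :
    ∃ x ∈ X, ∃ w ∈ B, w ∉ X ∧ G.Adj x w := by
  obtain ⟨x, hx⟩ := hX
  obtain ⟨p⟩ := hB.preconnected ⟨x, hXB hx⟩ ⟨v, hvB⟩
  obtain ⟨d, -, hd₁, hd₂⟩ := p.exists_boundary_dart (Subtype.val ⁻¹' X) hx hvX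
  exact ⟨d.fst, hd₁, d.snd, d.snd.2, hd₂, d.adj⟩

lemma eq_of_openNeighborhood_subset {X Y B : Set V} (hX : X.Nonempty)
    (hXY : G.openNeighborhood X ⊆ Y) (hXB : X ⊆ B) (hBY : Disjoint B Y)
    (hB : (G.induce B).Connected) : B = X := by
  refine Set.Subset.antisymm (fun v hvB => ?_) hXB
  by_contra hvX
  obtain ⟨x, hx, w, hwB, hwX, hxw⟩ := exists_adj_of_connected_induce hX hXB hB hvB hvX
  exact hBY.notMem_of_mem_left hwB (hXY ⟨hwX, x, hx, hxw⟩)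

lemma connectedExtensions_zero_subset [Finite V] (X Y : Set V) :
    G.connectedExtensions X Y 0 ⊆ {X} := by
  rintro B ⟨hXB, -, -, hk⟩
  have hBX : B \ X = ∅ := (Set.ncard_eq_zero (s := B \ X)).mp (by omega)
  exact (Set.sdiff_eq_empty.mp hBX).antisymm hXB

lemma connectedExtensions_subset_of_openNeighborhood_subset {X Y : Set V} (hX : X.Nonempty)
    (hXY : G.openNeighborhood X ⊆ Y) (k : ℕ) : G.connectedExtensions X Y k ⊆ {X} :=
  fun _ ⟨hXB, hBY, hB, _⟩ => eq_of_openNeighborhood_subset hX hXY hXB hBY hB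

lemma connectedExtensions_succ_subset [Finite V] {X Y : Set V} {w : V}
    (hw : w ∈ G.openNeighborhood X) (hwY : w ∉ Y) (k : ℕ) :
    G.connectedExtensions X Y (k + 1) ⊆
      G.connectedExtensions (insert w X) Y k ∪ G.connectedExtensions X (insert w Y) k := by
  rintro B ⟨hXB, hBY, hB, hk⟩
  by_cases hwB : w ∈ B
  · have hdec := Set.ncard_sdiff_insert_add_one hwB hw.1 (t := X)
    exact .inl ⟨Set.insert_subset hwB hXB, hBY, hB, by omega⟩
  · have hwN : w ∈ G.openNeighborhood B :=
      ⟨hwB, hw.2.imp fun _ hx => ⟨hXB hx.1, hx.2⟩⟩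
    have hdec := Set.ncard_sdiff_insert_add_one hwN hwY
    exact .inr ⟨hXB, Set.disjoint_insert_right.mpr ⟨hwB, hBY⟩, hB, by omega⟩

theorem ncard_connectedExtensions_le [Finite V] {X : Set V} (hX : X.Nonempty) (Y : Set V)
    (k : ℕ) : (G.connectedExtensions X Y k).ncard ≤ 2 ^ k := by
  induction k generalizing X Y with
  | zero =>
    simpa using Set.ncard_le_ncard (connectedExtensions_zero_subset X Y)
  | succ k ih =>
    by_cases hXY : G.openNeighborhood X ⊆ Y
    · calc (G.connectedExtensions X Y (k + 1)).ncard
          ≤ ({X} : Set (Set V)).ncard :=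
            Set.ncard_le_ncard (connectedExtensions_subset_of_openNeighborhood_subset hX hXY _)
        _ ≤ 2 ^ (k + 1) := by simp [Nat.one_le_two_pow]
    · obtain ⟨w, hw, hwY⟩ := Set.not_subset.mp hXY
      calc (G.connectedExtensions X Y (k + 1)).ncard
          ≤ (G.connectedExtensions (insert w X) Y k ∪
              G.connectedExtensions X (insert w Y) k).ncard :=
            Set.ncard_le_ncard (connectedExtensions_succ_subset hw hwY k)
        _ ≤ 2 ^ k + 2 ^ k :=
            (Set.ncard_union_le _ _).trans
              (add_le_add (ih (Set.insert_nonempty w X) Y) (ih hX _))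
        _ = 2 ^ (k + 1) := by ring

end SimpleGraph

/-- The number of `(p, q)`-connected sets of a graph `G` on `n`
vertices, i.e. nonempty vertex sets `B` inducing a connected subgraph with
`|B| ≤ p` and `|N_G(B)| ≤ q`, is at most `2 ^ (p + q) * n`. -/
theorem stmt4 {V : Type} [Fintype V] (G : SimpleGraph V) (p q : ℕ) :
    {B : Set V | B.Nonempty ∧ (G.induce B).Connected ∧ B.ncard ≤ p ∧
        {v | v ∉ B ∧ ∃ u ∈ B, G.Adj u v}.ncard ≤ q}.ncard
      ≤ 2 ^ (p + q) * Fintype.card V := by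
  have hcover : {B : Set V | B.Nonempty ∧ (G.induce B).Connected ∧ B.ncard ≤ p ∧
      {v | v ∉ B ∧ ∃ u ∈ B, G.Adj u v}.ncard ≤ q} ⊆
      ⋃ r : V, G.connectedExtensions {r} ∅ (p + q) := by
    rintro B ⟨⟨r, hr⟩, hB, hp, hq⟩
    refine Set.mem_iUnion.mpr ⟨r, Set.singleton_subset_iff.mpr hr, Set.disjoint_empty B, hB, ?_⟩
    rw [Set.sdiff_empty]
    exact add_le_add ((Set.ncard_le_ncard Set.sdiff_subset).trans hp) hq
  calc _ ≤ (⋃ r : V, G.connectedExtensions {r} ∅ (p + q)).ncard := Set.ncard_le_ncard hcover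
    _ ≤ ∑ r : V, (G.connectedExtensions {r} ∅ (p + q)).ncard :=
        Set.ncard_iUnion_le_of_fintype _
    _ ≤ ∑ _r : V, 2 ^ (p + q) := Finset.sum_le_sum fun r _ =>
        SimpleGraph.ncard_connectedExtensions_le (Set.singleton_nonempty r) ∅ _
    _ = 2 ^ (p + q) * Fintype.card V := by simp [mul_comm]
end

section
/- For every class of graphs H containing the empty graph and every graph G, the H-treewidth of G is at most the H-elimination distance of G: tw_H(G) ≤ ed_H(G). -/
/-- An `H`-elimination decomposition of a graph `G` (see the paper): a rooted
forest given by its strict ancestor relation, bags, and base vertices `L`. -/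
structure ElimDecomp (H : ∀ V : Type, SimpleGraph V → Prop) {V : Type}
    (G : SimpleGraph V) where
  ι : Type
  anc : ι → ι → Prop
  anc_trans : ∀ {a b c : ι}, anc a b → anc b c → anc a c
  anc_irrefl : ∀ a : ι, ¬ anc a a
  anc_chain : ∀ {a b c : ι}, anc a c → anc b c → a = b ∨ anc a b ∨ anc b a
  anc_finite : ∀ t : ι, {a : ι | anc a t}.Finite
  bag : ι → Set V
  L : Set V
  internal_bag : ∀ t : ι, (∃ t', anc t t') → (bag t).Subsingleton ∧ bag t ∩ L = ∅
  partition : ∀ v : V, ∃! t : ι, v ∈ bag t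
  edge_anc : ∀ u v : V, G.Adj u v → ∀ t₁ t₂ : ι, u ∈ bag t₁ → v ∈ bag t₂ →
      t₁ = t₂ ∨ anc t₁ t₂ ∨ anc t₂ t₁
  leaf_bag : ∀ t : ι, (∀ t', ¬ anc t t') → bag t ⊆ L ∧ H ↥(bag t) (G.induce (bag t))

/-- An `H`-tree decomposition of a graph `G`: a tree `T` with bags and base
vertices `L` such that the bags containing any vertex form a nonempty connected
subtree, every edge is covered by a bag, each base vertex appears in exactly one
bag which is at a leaf (a node with at most one neighbour), and the base part of
every bag induces a graph in `H`. -/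
structure HTreeDecomp (H : ∀ V : Type, SimpleGraph V → Prop) {V : Type}
    (G : SimpleGraph V) where
  ι : Type
  T : SimpleGraph ι
  tree_conn : T.Connected
  tree_acyclic : T.IsAcyclic
  bag : ι → Set V
  L : Set V
  vert_subtree : ∀ v : V, (T.induce {t : ι | v ∈ bag t}).Connected
  edge_bag : ∀ u v : V, G.Adj u v → ∃ t : ι, u ∈ bag t ∧ v ∈ bag t
  base_unique : ∀ v ∈ L, ∃ t : ι, v ∈ bag t ∧ (T.neighborSet t).Subsingleton ∧
      ∀ t' : ι, v ∈ bag t' → t' = t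
  base_in : ∀ t : ι, H ↥(bag t ∩ L) (G.induce (bag t ∩ L))

/-!
Add a common root to the elimination forest and give every forest node `t` the bag of all
vertices placed at `t` or at an ancestor of `t`. The nodes whose bag contains `v` are then
exactly the descendants of the node holding `v`, which form a subtree; the endpoints of an
edge sit on a common root-to-leaf path, so the lower one's bag covers the edge; a base
vertex lies at a leaf and in no other bag. Internal nodes hold at most one vertex and no
base vertex, so the non-base part of the bag at `t` has at most `depth t + 1` elements.
-/

open SimpleGraph

section ParentGraph

variable {α : Type*} {p : α → α} {h : α → ℕ}

theorem fromRel_parent_adj_self {x : α} (hx : p x ≠ x) :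
    (fromRel fun x y => p x = y).Adj x (p x) :=
  (fromRel_adj _ _ _).2 ⟨hx.symm, Or.inl rfl⟩

theorem induce_fromRel_parent_connected {S : Set α} {s : α} (hs : s ∈ S)
    (hS : ∀ x ∈ S, x ≠ s → p x ∈ S ∧ h (p x) < h x) :
    ((fromRel fun x y => p x = y).induce S).Connected := by
  have reach_top : ∀ x (hx : x ∈ S),
      ((fromRel fun x y => p x = y).induce S).Reachable ⟨x, hx⟩ ⟨s, hs⟩ := by
    intro x
    induction hn : h x using Nat.strong_induction_on generalizing x with
    | _ n ih =>
      intro hx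
      by_cases hxs : x = s
      · subst hxs; rfl
      obtain ⟨hpS, hlt⟩ := hS x hx hxs
      have hadj : ((fromRel fun x y => p x = y).induce S).Adj ⟨x, hx⟩ ⟨p x, hpS⟩ :=
        fromRel_parent_adj_self (ne_of_apply_ne h hlt.ne)
      exact hadj.reachable.trans (ih _ (hn ▸ hlt) _ rfl hpS)
  exact (connected_iff _).2
    ⟨fun x y => (reach_top x x.2).trans (reach_top y y.2).symm, ⟨⟨s, hs⟩⟩⟩

theorem fromRel_parent_connected (r : α) (hr : ∀ x, x ≠ r → h (p x) < h x) :
    (fromRel fun x y => p x = y).Connected :=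
  (induceUnivIso _).connected_iff.1 <|
    induce_fromRel_parent_connected (Set.mem_univ r) fun x _ hx => ⟨trivial, hr x hx⟩

theorem rank_iterate_le (hh : ∀ x, p x ≠ x → h (p x) < h x) (n : ℕ) (x : α) :
    h (p^[n] x) ≤ h x := by
  induction n generalizing x with
  | zero => rfl
  | succ n ih =>
    rw [Function.iterate_succ_apply]
    refine (ih (p x)).trans ?_
    by_cases hx : p x = x
    · rw [hx]
    · exact (hh x hx).le

theorem fromRel_parent_isAcyclic (hh : ∀ x, p x ≠ x → h (p x) < h x) :
    (fromRel fun x y => p x = y).IsAcyclic := by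
  set T := fromRel fun x y => p x = y
  have parent_isBridge : ∀ x, p x ≠ x → T.IsBridge s(x, p x) := by
    intro x hx
    rw [isBridge_iff]
    intro hreach
    -- `below` is closed under the remaining edges and contains `x`, but not `p x`,
    -- as `h` would otherwise return to `h x` after a strict decrease
    let below : Set α := {z | ∃ n, p^[n] z = x}
    have closed : ∀ a b, (T.deleteEdges {s(x, p x)}).Adj a b → a ∈ below → b ∈ below := by
      rintro a b ⟨hab, hcut⟩ ⟨n, hn⟩
      rcases ((fromRel_adj _ _ _).1 hab).2 with rfl | rfl
      · cases n with
        | zero => exact absurd ⟨by rw [← hn]; rfl, hab.ne⟩ hcut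
        | succ m => exact ⟨m, by rwa [Function.iterate_succ_apply] at hn⟩
      · exact ⟨n + 1, by rwa [Function.iterate_succ_apply]⟩
    have reach_below : ∀ y, (T.deleteEdges {s(x, p x)}).Reachable x y → y ∈ below := by
      intro y hy
      rw [reachable_iff_reflTransGen] at hy
      induction hy with
      | refl => exact ⟨0, rfl⟩
      | tail _ hab ih => exact closed _ _ hab ih
    obtain ⟨n, hn⟩ := reach_below _ hreach
    have := rank_iterate_le hh n (p x)
    rw [hn] at this
    exact (hh x hx).not_ge this
  rw [isAcyclic_iff_forall_adj_isBridge]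
  intro x y hxy
  rcases ((fromRel_adj _ _ _).1 hxy).2 with rfl | rfl
  · exact parent_isBridge x hxy.ne.symm
  · rw [Sym2.eq_swap]
    exact parent_isBridge y hxy.ne

end ParentGraph

namespace ElimDecomp

variable {H : ∀ V : Type, SimpleGraph V → Prop} {V : Type} {G : SimpleGraph V}
  (D : ElimDecomp H G)

def ancestors (t : D.ι) : Set D.ι := {a | D.anc a t}

noncomputable def depth (t : D.ι) : ℕ := (D.ancestors t).ncard

theorem depth_lt_depth_of_anc {a b : D.ι} (h : D.anc a b) : D.depth a < D.depth b :=
  Set.ncard_lt_ncard ⟨fun _ hc => D.anc_trans hc h, fun hsub => D.anc_irrefl a (hsub h)⟩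
    (D.anc_finite b)

theorem exists_parent {t : D.ι} (h : (D.ancestors t).Nonempty) :
    ∃ p, D.anc p t ∧ ∀ b, D.anc b t → b = p ∨ D.anc b p := by
  obtain ⟨p, hp, hmax⟩ := (D.anc_finite t).exists_maximalFor D.depth _ h
  refine ⟨p, hp, fun b hb => ?_⟩
  rcases D.anc_chain hb hp with rfl | hbp | hpb
  · exact Or.inl rfl
  · exact Or.inr hbp
  · exact absurd (hmax hb (D.depth_lt_depth_of_anc hpb).le) (D.depth_lt_depth_of_anc hpb).not_ge

open Classical in
noncomputable def parent (t : D.ι) : Option D.ι :=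
  if h : (D.ancestors t).Nonempty then some (D.exists_parent h).choose else none

theorem anc_of_parent_eq_some {t p : D.ι} (h : D.parent t = some p) : D.anc p t := by
  unfold parent at h
  split_ifs at h with hne
  exact Option.some_injective _ h ▸ (D.exists_parent hne).choose_spec.1

theorem exists_parent_eq_some_of_anc {a t : D.ι} (h : D.anc a t) :
    ∃ p, D.parent t = some p ∧ (a = p ∨ D.anc a p) := by
  have hne : (D.ancestors t).Nonempty := ⟨a, h⟩
  exact ⟨_, by simp [parent, hne], (D.exists_parent hne).choose_spec.2 a h⟩

noncomputable def home (v : V) : D.ι := (D.partition v).exists.choose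

theorem mem_bag_iff {v : V} {t : D.ι} : v ∈ D.bag t ↔ D.home v = t :=
  ⟨fun h => (D.partition v).unique (D.partition v).exists.choose_spec h,
    fun h => h ▸ (D.partition v).exists.choose_spec⟩

theorem mem_bag_home (v : V) : v ∈ D.bag (D.home v) := D.mem_bag_iff.2 rfl

theorem bag_diff_L_subsingleton (t : D.ι) : (D.bag t \ D.L).Subsingleton := by
  by_cases hint : ∃ t', D.anc t t'
  · exact (D.internal_bag t hint).1.anti Set.sdiff_subset
  · rw [Set.sdiff_eq_empty.2 (D.leaf_bag t (not_exists.1 hint)).1]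
    exact Set.subsingleton_empty

theorem not_anc_home_of_mem_L {v : V} (hv : v ∈ D.L) (t : D.ι) : ¬ D.anc (D.home v) t :=
  fun h => (D.internal_bag _ ⟨t, h⟩).2.subset ⟨D.mem_bag_home v, hv⟩

noncomputable def treeParent (x : Option D.ι) : Option D.ι := x.bind D.parent

noncomputable def tree : SimpleGraph (Option D.ι) := fromRel fun x y => D.treeParent x = y

noncomputable def treeRank : Option D.ι → ℕ
  | none => 0
  | some t => D.depth t + 1

def treeBag : Option D.ι → Set V
  | none => ∅
  | some t => {v | D.home v = t ∨ D.anc (D.home v) t}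

theorem treeRank_treeParent_lt (t : D.ι) :
    D.treeRank (D.treeParent (some t)) < D.treeRank (some t) := by
  cases hp : D.parent t with
  | none => simp [treeParent, treeRank, hp]
  | some p =>
    simpa [treeParent, treeRank, hp] using D.depth_lt_depth_of_anc (D.anc_of_parent_eq_some hp)

theorem tree_connected : D.tree.Connected :=
  fromRel_parent_connected none fun x hx => by
    obtain ⟨t, rfl⟩ := Option.ne_none_iff_exists'.1 hx
    exact D.treeRank_treeParent_lt t

theorem tree_isAcyclic : D.tree.IsAcyclic :=
  fromRel_parent_isAcyclic (h := D.treeRank) fun x hx => by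
    cases x with
    | none => exact absurd rfl hx
    | some t => exact D.treeRank_treeParent_lt t

theorem treeBag_connected (v : V) : (D.tree.induce {x | v ∈ D.treeBag x}).Connected := by
  refine induce_fromRel_parent_connected (s := some (D.home v)) (h := D.treeRank)
    (Or.inl rfl) fun x hx hne => ?_
  cases x with
  | none => exact absurd hx id
  | some t =>
    have hanc : D.anc (D.home v) t := (hx : _ ∨ _).resolve_left fun h => hne (h ▸ rfl)
    obtain ⟨p, hp, hvp⟩ := D.exists_parent_eq_some_of_anc hanc
    refine ⟨?_, D.treeRank_treeParent_lt t⟩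
    simp only [treeParent, Option.bind_some, hp]
    exact hvp.imp_left id

theorem exists_treeBag_of_adj {u v : V} (huv : G.Adj u v) :
    ∃ x, u ∈ D.treeBag x ∧ v ∈ D.treeBag x := by
  rcases D.edge_anc u v huv _ _ (D.mem_bag_home u) (D.mem_bag_home v) with h | h | h
  · exact ⟨some (D.home v), Or.inl h, Or.inl rfl⟩
  · exact ⟨some (D.home v), Or.inr h, Or.inl rfl⟩
  · exact ⟨some (D.home u), Or.inl rfl, Or.inr h⟩

theorem tree_neighborSet_subsingleton {s : D.ι} (hleaf : ∀ t, ¬ D.anc s t) :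
    (D.tree.neighborSet (some s)).Subsingleton := by
  have eq_parent : ∀ y ∈ D.tree.neighborSet (some s), y = D.treeParent (some s) := by
    intro y hy
    obtain ⟨hne, h | h⟩ := (fromRel_adj (fun x y => D.treeParent x = y) _ _).1 hy
    · exact h.symm
    · cases y with
      | none => exact absurd h.symm hne
      | some u => exact absurd (D.anc_of_parent_eq_some (t := u) h) (hleaf u)
  exact fun a ha b hb => (eq_parent a ha).trans (eq_parent b hb).symm

theorem treeBag_some_inter_L (t : D.ι) : D.treeBag (some t) ∩ D.L = D.bag t ∩ D.L := by
  ext v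
  simp only [treeBag, Set.mem_inter_iff, D.mem_bag_iff]
  exact and_congr_left fun hv => or_iff_left (D.not_anc_home_of_mem_L hv t)

theorem ncard_treeBag_diff_L_le (x : Option D.ι) :
    (D.treeBag x \ D.L).ncard ≤ D.treeRank x := by
  cases x with
  | none => simp [treeBag, treeRank]
  | some t =>
    calc (D.treeBag (some t) \ D.L).ncard ≤ (insert t (D.ancestors t)).ncard := by
          refine Set.ncard_le_ncard_of_injOn D.home (fun v hv => hv.1) ?_
            ((D.anc_finite t).insert t)
          intro v hv w hw hvw
          exact D.bag_diff_L_subsingleton (D.home v) ⟨D.mem_bag_home v, hv.2⟩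
            ⟨hvw ▸ D.mem_bag_home w, hw.2⟩
      _ ≤ D.treeRank (some t) := Set.ncard_insert_le _ _

noncomputable def toHTreeDecomp
    (hempty : ∀ (W : Type) (G' : SimpleGraph W), IsEmpty W → H W G') : HTreeDecomp H G where
  ι := Option D.ι
  T := D.tree
  tree_conn := D.tree_connected
  tree_acyclic := D.tree_isAcyclic
  bag := D.treeBag
  L := D.L
  vert_subtree := D.treeBag_connected
  edge_bag _ _ := D.exists_treeBag_of_adj
  base_unique v hv := by
    have hleaf := D.not_anc_home_of_mem_L hv
    refine ⟨some (D.home v), Or.inl rfl, D.tree_neighborSet_subsingleton hleaf, fun x hx => ?_⟩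
    cases x with
    | none => exact absurd hx id
    | some t => exact congrArg some ((hx : _ ∨ _).resolve_right (hleaf t)).symm
  base_in x := by
    cases x with
    | none => exact hempty _ _ (Set.isEmpty_coe_sort.2 (Set.empty_inter _))
    | some t =>
      rw [D.treeBag_some_inter_L]
      by_cases hint : ∃ t', D.anc t t'
      · rw [(D.internal_bag t hint).2]
        exact hempty _ _ inferInstance
      · have hleaf := D.leaf_bag t (not_exists.1 hint)
        rw [Set.inter_eq_left.2 hleaf.1]
        exact hleaf.2

end ElimDecomp

theorem stmt8_general (H : ∀ V : Type, SimpleGraph V → Prop)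
    (hempty : ∀ (W : Type) (G' : SimpleGraph W), IsEmpty W → H W G')
    {V : Type} (G : SimpleGraph V) (d : ℕ)
    (h : ∃ D : ElimDecomp H G, ∀ t : D.ι, {a : D.ι | D.anc a t}.ncard ≤ d) :
    ∃ D : HTreeDecomp H G, ∀ t : D.ι, (D.bag t \ D.L).ncard ≤ d + 1 := by
  obtain ⟨D, hd⟩ := h
  refine ⟨D.toHTreeDecomp hempty, fun x => (D.ncard_treeBag_diff_L_le x).trans ?_⟩
  cases x with
  | none => exact Nat.zero_le _
  | some t => exact Nat.succ_le_succ (hd t)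

/-- For every class `H` containing the empty graph and every graph
`G`, `tw_H(G) ≤ ed_H(G)`: any `H`-elimination decomposition of depth at most `d`
yields an `H`-tree decomposition of width at most `d`
(i.e. all bags satisfy `|bag \ L| ≤ d + 1`). -/
theorem stmt8 (H : ∀ V : Type, SimpleGraph V → Prop)
    (hempty : ∀ (W : Type) (G' : SimpleGraph W), IsEmpty W → H W G')
    {V : Type} [Fintype V] (G : SimpleGraph V) (d : ℕ)
    (h : ∃ D : ElimDecomp H G, ∀ t : D.ι, {a : D.ι | D.anc a t}.ncard ≤ d) :
    ∃ D : HTreeDecomp H G, ∀ t : D.ι, (D.bag t \ D.L).ncard ≤ d + 1 :=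
  stmt8_general H hempty G d h
end
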